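/- Let $E = E_+ \oplus E_-$ be a graded finite-dimensional space, $V_0$ an odd self-adjoint invertible endomorphism and $A$ any even endomorphism. Then there exist $C, c > 0$ such that $\|e^{-(A+\sqrt{T}V_0)^2}\| \leq C e^{-cT}$ for all $T$ sufficiently large; in particular $\|V_0 e^{-(A + \sqrt{T} V_0)^2}\| \to 0$ exponentially as $T \to \infty$. -/

import Mathlib

open ContinuousLinearMap NormedSpace

set_option synthInstance.maxHeartbeats 1000000
set_option maxHeartbeats 1000000

local notation "⟪" x ", " y "⟫" => @inner ℂ _ _ x y

/-- Logarithmic-norm bound: if `re ⟪B x, x⟫ ≥ μ ‖x‖²` for all `x`, then `‖exp(-B)‖ ≤ exp(-μ)`. -/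
lemma opNorm_exp_neg_le {E : Type*} [NormedAddCommGroup E] [InnerProductSpace ℂ E]
    [CompleteSpace E] (B : E →L[ℂ] E) (μ : ℝ)
    (h : ∀ x : E, μ * ‖x‖ ^ 2 ≤ (⟪B x, x⟫).re) :
    ‖exp (-B)‖ ≤ Real.exp (-μ) := by
  apply opNorm_le_bound _ (Real.exp_nonneg _)
  intro x
  set C : E →L[ℂ] E := -B with hC
  set u : ℝ → E := fun t => exp (t • C) x with hu
  have hderiv : ∀ t : ℝ, HasDerivAt u (C (u t)) t := by
    intro t
    have h1 : HasDerivAt (fun s : ℝ => exp (s • C)) (exp (t • C) * C) t :=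
      hasDerivAt_exp_smul_const C t
    rw [(((Commute.refl C).smul_left t).exp_left).eq] at h1
    have h2 := (((ContinuousLinearMap.apply ℂ E x).restrictScalars
      ℝ).hasFDerivAt.comp_hasDerivAt t h1)
    have hee : (exp : (E →L[ℂ] E) → _) = exp := rfl
    simpa [hu, hee, ContinuousLinearMap.mul_apply, Function.comp_def] using h2
  set f : ℝ → ℝ := fun t => (⟪u t, u t⟫).re with hf
  have hfderiv : ∀ t : ℝ, HasDerivAt f ((⟪u t, C (u t)⟫ + ⟪C (u t), u t⟫).re) t := by
    intro t
    exact Complex.reCLM.hasFDerivAt.comp_hasDerivAt t ((hderiv t).inner ℂ (hderiv t))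
  set g : ℝ → ℝ := fun t => Real.exp (2 * μ * t) * f t with hg
  have hgderiv : ∀ t : ℝ, HasDerivAt g
      (Real.exp (2 * μ * t) * (2 * μ * 1) * f t +
        Real.exp (2 * μ * t) * (⟪u t, C (u t)⟫ + ⟪C (u t), u t⟫).re) t := by
    intro t
    exact (((hasDerivAt_id t).const_mul (2 * μ)).exp).mul (hfderiv t)
  have hgmono : g 1 ≤ g 0 := by
    have : AntitoneOn g (Set.Icc 0 1) := by
      apply antitoneOn_of_deriv_nonpos (convex_Icc 0 1)
      · exact fun t _ => ((hgderiv t).continuousAt).continuousWithinAt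
      · exact fun t _ => ((hgderiv t).differentiableAt).differentiableWithinAt
      · intro t ht
        rw [(hgderiv t).deriv]
        have hsym : (⟪u t, B (u t)⟫).re = (⟪B (u t), u t⟫).re := by
          rw [← inner_conj_symm (u t) (B (u t)), Complex.conj_re]
        have hre : (⟪u t, C (u t)⟫ + ⟪C (u t), u t⟫).re = -(2 * (⟪B (u t), u t⟫).re) := by
          simp only [hC, ContinuousLinearMap.neg_apply, inner_neg_left, inner_neg_right,
            Complex.add_re, Complex.neg_re, hsym]
          ring
        rw [hre]
        have hfval : f t = ‖u t‖ ^ 2 := by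
          have := @inner_self_eq_norm_sq ℂ _ _ _ _ (u t)
          simpa [hf] using this
        have h4 := mul_le_mul_of_nonneg_left (h (u t)) (Real.exp_pos (2 * μ * t)).le
        rw [hfval]
        nlinarith [h4]
    exact this (by norm_num) (by norm_num) (by norm_num)
  have h0 : g 0 = ‖x‖ ^ 2 := by
    have : u 0 = x := by simp [hu]
    have h3 := @inner_self_eq_norm_sq ℂ _ _ _ _ x
    simp only [hg, hf, this, mul_zero, Real.exp_zero, one_mul]
    simpa using h3
  have h1' : g 1 = Real.exp (2 * μ) * ‖exp (-B) x‖ ^ 2 := by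
    have : u 1 = exp (-B) x := by simp [hu, hC]
    have h3 : (⟪exp (-B) x, exp (-B) x⟫).re = ‖exp (-B) x‖ ^ 2 := by
      simpa using @inner_self_eq_norm_sq ℂ _ _ _ _ (exp (-B) x)
    simp only [hg, hf, this, mul_one, h3]
  have key : Real.exp (2 * μ) * ‖exp (-B) x‖ ^ 2 ≤ ‖x‖ ^ 2 := by
    rw [← h1', ← h0]; exact hgmono
  have hmul : Real.exp (2 * μ) * Real.exp (-μ) ^ 2 = 1 := by
    rw [sq, ← Real.exp_add, ← Real.exp_add, show 2 * μ + (-μ + -μ) = 0 by ring, Real.exp_zero]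
  have h2 : ‖exp (-B) x‖ ^ 2 ≤ (Real.exp (-μ) * ‖x‖) ^ 2 := by
    nlinarith [key, Real.exp_pos (2 * μ), sq_nonneg (Real.exp (-μ)), sq_nonneg ‖x‖]
  have := Real.sqrt_le_sqrt h2
  rwa [Real.sqrt_sq (norm_nonneg _), Real.sqrt_sq (by positivity)] at this

/-- For `V₀` an odd self-adjoint invertible operator and `A` an even operator on a
finite-dimensional `ℤ₂`-graded complex inner product space, the heat operator
`e^{-(A + √T V₀)²}` decays exponentially in norm: there are `C, c > 0` and `T₀` with
`‖e^{-(A+√T V₀)²}‖ ≤ C e^{-cT}` for all `T ≥ T₀`. -/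
theorem heat_operator_exponential_decay
    (E : Type*) [NormedAddCommGroup E] [InnerProductSpace ℂ E] [FiniteDimensional ℂ E]
    (τ A V0 : E →L[ℂ] E)
    (hτsq : τ * τ = 1)
    (hτadj : ContinuousLinearMap.adjoint τ = τ)
    (heven : A * τ = τ * A)
    (hodd : V0 * τ = -(τ * V0))
    (hV0adj : ContinuousLinearMap.adjoint V0 = V0)
    (hV0inv : IsUnit V0) :
    ∃ C > (0:ℝ), ∃ c > (0:ℝ), ∃ T0 : ℝ, ∀ T ≥ T0,
      ‖NormedSpace.exp (-((A + ((Real.sqrt T : ℂ)) • V0) ^ 2))‖ ≤ C * Real.exp (-c * T) := by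
  by_cases hE : Subsingleton E
  · refine ⟨1, one_pos, 1, one_pos, 0, fun T _ => ?_⟩
    have h0 : (exp (-((A + ((Real.sqrt T : ℂ)) • V0) ^ 2)) : E →L[ℂ] E) = 0 :=
      Subsingleton.elim _ _
    rw [h0, norm_zero, one_mul]
    positivity
  · haveI : Nontrivial E := not_subsingleton_iff_nontrivial.mp hE
    obtain ⟨U, hU⟩ := hV0inv
    set K := ‖((U⁻¹ : (E →L[ℂ] E)ˣ) : E →L[ℂ] E)‖ with hKdef
    have hK : 0 < K := norm_pos_iff.mpr (Units.ne_zero U⁻¹)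
    set lam : ℝ := (K ^ 2)⁻¹ with hlamdef
    have hlam : 0 < lam := by positivity
    have hlow : ∀ x : E, lam * ‖x‖ ^ 2 ≤ ‖V0 x‖ ^ 2 := by
      intro x
      have hx : x = ((U⁻¹ : (E →L[ℂ] E)ˣ) : E →L[ℂ] E) (V0 x) := by
        have : (((U⁻¹ : (E →L[ℂ] E)ˣ) : E →L[ℂ] E) * V0) x = (1 : E →L[ℂ] E) x := by
          rw [← hU, Units.inv_mul]
        simpa [ContinuousLinearMap.mul_apply] using this.symm
      have h1 : ‖x‖ ≤ K * ‖V0 x‖ := by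
        conv_lhs => rw [hx]
        exact le_opNorm _ _
      have h2 : ‖x‖ ^ 2 ≤ K ^ 2 * ‖V0 x‖ ^ 2 := by nlinarith [norm_nonneg x, norm_nonneg (V0 x)]
      rw [hlamdef, inv_mul_le_iff₀ (by positivity)]
      linarith
    set a : ℝ := ‖A * V0 + V0 * A‖ with hadef
    set b : ℝ := ‖A * A‖ with hbdef
    have ha : 0 ≤ a := norm_nonneg _
    have hb : 0 ≤ b := norm_nonneg _
    refine ⟨1, one_pos, lam / 2, by positivity, max 1 ((2 * (a + b) / lam) ^ 2), fun T hT => ?_⟩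
    have hT1 : (1:ℝ) ≤ T := le_trans (le_max_left _ _) hT
    have hT0 : (0:ℝ) ≤ T := by linarith
    set s : ℝ := Real.sqrt T with hsdef
    have hs0 : 0 ≤ s := Real.sqrt_nonneg T
    have hss : s * s = T := Real.mul_self_sqrt hT0
    have hs1 : 1 ≤ s := by
      rw [hsdef, show (1:ℝ) = Real.sqrt 1 by simp]
      exact Real.sqrt_le_sqrt hT1
    have hsab : 2 * (a + b) / lam ≤ s := by
      rw [hsdef]
      calc 2 * (a + b) / lam = Real.sqrt ((2 * (a + b) / lam) ^ 2) :=
            (Real.sqrt_sq (by positivity)).symm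
        _ ≤ Real.sqrt T := Real.sqrt_le_sqrt (le_trans (le_max_right _ _) hT)
    -- the quadratic lower bound
    set μ : ℝ := lam * T - a * s - b with hμdef
    have hμge : lam / 2 * T ≤ μ := by
      have h1 : a + b ≤ lam / 2 * s := by
        rw [div_le_iff₀ hlam] at hsab
        nlinarith
      have h2 : a * s + b ≤ (a + b) * s := by nlinarith
      nlinarith
    -- expand the square
    set W : E →L[ℂ] E := A * V0 + V0 * A with hWdef
    have hBeq : (A + ((s : ℂ)) • V0) ^ 2
        = A * A + (s : ℂ) • W + (T : ℂ) • (V0 * V0) := by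
      have hcc : ((s : ℂ)) * ((s : ℂ)) = (T : ℂ) := by
        rw [← Complex.ofReal_mul, hss]
      rw [pow_two, hWdef]
      simp only [add_mul, mul_add, mul_smul_comm, smul_mul_assoc, smul_smul, smul_add, hcc]
      abel
    have hbound : ∀ x : E, μ * ‖x‖ ^ 2 ≤ (⟪((A + ((s : ℂ)) • V0) ^ 2) x, x⟫).re := by
      intro x
      rw [hBeq]
      have hxpt : (⟪(A * A + (s : ℂ) • W + (T : ℂ) • (V0 * V0)) x, x⟫).re
          = (⟪(A * A) x, x⟫).re + s * (⟪W x, x⟫).re + T * (⟪(V0 * V0) x, x⟫).re := by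
        simp only [ContinuousLinearMap.add_apply, ContinuousLinearMap.smul_apply,
          inner_add_left, inner_smul_left, Complex.add_re, Complex.conj_ofReal,
          Complex.re_ofReal_mul]
      rw [hxpt]
      have hAA : -(b * ‖x‖ ^ 2) ≤ (⟪(A * A) x, x⟫).re := by
        have h1 : ‖⟪(A * A) x, x⟫‖ ≤ b * ‖x‖ ^ 2 := by
          calc ‖⟪(A * A) x, x⟫‖ ≤ ‖(A * A) x‖ * ‖x‖ := norm_inner_le_norm _ _
            _ ≤ (b * ‖x‖) * ‖x‖ := by
                have := (A * A).le_opNorm x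
                nlinarith [norm_nonneg x]
            _ = b * ‖x‖ ^ 2 := by ring
        have h2 : |(⟪(A * A) x, x⟫).re| ≤ ‖⟪(A * A) x, x⟫‖ := Complex.abs_re_le_norm _
        have := neg_abs_le ((⟪(A * A) x, x⟫).re)
        linarith
      have hW : -(a * ‖x‖ ^ 2) ≤ (⟪W x, x⟫).re := by
        have h1 : ‖⟪W x, x⟫‖ ≤ a * ‖x‖ ^ 2 := by
          calc ‖⟪W x, x⟫‖ ≤ ‖W x‖ * ‖x‖ := norm_inner_le_norm _ _
            _ ≤ (a * ‖x‖) * ‖x‖ := by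
                have := W.le_opNorm x
                nlinarith [norm_nonneg x]
            _ = a * ‖x‖ ^ 2 := by ring
        have h2 : |(⟪W x, x⟫).re| ≤ ‖⟪W x, x⟫‖ := Complex.abs_re_le_norm _
        have := neg_abs_le ((⟪W x, x⟫).re)
        linarith
      have hVV : lam * ‖x‖ ^ 2 ≤ (⟪(V0 * V0) x, x⟫).re := by
        have h1 : ⟪(V0 * V0) x, x⟫ = ⟪V0 x, V0 x⟫ := by
          rw [ContinuousLinearMap.mul_apply]
          nth_rewrite 1 [← hV0adj]
          rw [ContinuousLinearMap.adjoint_inner_left]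
        rw [h1]
        have h2 : (⟪V0 x, V0 x⟫).re = ‖V0 x‖ ^ 2 := by
          simpa using @inner_self_eq_norm_sq ℂ _ _ _ _ (V0 x)
        rw [h2]
        exact hlow x
      have hWs : s * -(a * ‖x‖ ^ 2) ≤ s * (⟪W x, x⟫).re := mul_le_mul_of_nonneg_left hW hs0
      have hVT : T * (lam * ‖x‖ ^ 2) ≤ T * (⟪(V0 * V0) x, x⟫).re :=
        mul_le_mul_of_nonneg_left hVV hT0
      rw [hμdef]
      nlinarith [hAA, hWs, hVT]
    have hnorm := opNorm_exp_neg_le _ μ hbound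
    have hfinal : Real.exp (-μ) ≤ Real.exp (-(lam / 2) * T) := by
      rw [Real.exp_le_exp]
      linarith
    rw [one_mul]
    exact le_trans hnorm hfinal
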